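/- Let R be of type E_6 and set v_2 := s_2 s_4 s_5 s_3 s_6 s_4 s_1 s_3 s_5 s_4 s_2 ∈ W. Then: (i) w_{0, S∖{α_2}} v_2(α_4) = ω_2 − (α_2 + α_3 + 2α_4 + α_5) = α_1 + α_2 + α_3 + α_4 + α_5 + α_6; (ii) for each i ∈ {3, 4, 5}, w_{0, S∖{α_2, α_i}} w_{0, S∖{α_2}} v_2(α_4) is a positive root that is not simple. -/

import Mathlib

/-!
Let `J = S ∖ {α₂}`, a Dynkin chain of type `A₅`, and let `w₀` be the longest element of `W_J`.
By the exchange argument, `w₀` sends every simple root of `J` to a negative root of `R_J`; a height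
count applied to `w₀` and `w₀⁻¹` then shows that `w₀ α_t = -α_{σ t}` for a map `σ` of `J` into
itself. Since `w₀` is an isometry, `σ` preserves the Dynkin diagram, so `w₀ α₄ = -α₄` and
`w₀ (α₁ + α₆) = -(α₁ + α₆)`; moreover `w₀` fixes `ω₂ ⟂ J`. Writing
`v₂(α₄) = α₂ + α₃ + 2α₄ + α₅ = ½ ω₂ + ½ (α₄ - α₁ - α₆)` gives `w₀ v₂(α₄) = ω₂ - v₂(α₄)`.
For (ii), elements of `W_{J'}` do not change the coefficients of the simple roots outside `J'`,
so the image keeps the coefficients `1` at `α₂` and `α_i`: it is a positive root with two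
nonzero coefficients, hence not simple.
-/

noncomputable section

open scoped Classical

local notation "⟪" x ", " y "⟫" => @inner ℝ _ _ x y

namespace PaperFormal

variable (V : Type*) [NormedAddCommGroup V] [InnerProductSpace ℝ V] [FiniteDimensional ℝ V]

/-- The reflection of the Euclidean space `V` in the hyperplane orthogonal to `v`,
i.e. `β ↦ β - (2⟪β,v⟫/⟪v,v⟫) v`. -/
def sref (v : V) : V ≃ₗᵢ[ℝ] V := Submodule.reflection (ℝ ∙ v)ᗮ

/-- A reduced irreducible crystallographic root system `R` in the Euclidean space `V`,
together with a fixed base of simple roots `a 1, …, a n`. -/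
structure RootSystemWithBase (n : ℕ) : Type _ where
  /-- the set of roots -/
  R : Set V
  /-- the simple roots `a 1, …, a n` (values outside `{1, …, n}` are irrelevant) -/
  a : ℕ → V
  finite : R.Finite
  ne_zero : ∀ β ∈ R, β ≠ 0
  refl_mem : ∀ α ∈ R, ∀ β ∈ R, sref V α β ∈ R
  crystallographic : ∀ α ∈ R, ∀ β ∈ R, ∃ k : ℤ, 2 * ⟪β, α⟫ / ⟪α, α⟫ = (k : ℝ)
  reduced : ∀ α ∈ R, ∀ t : ℝ, t • α ∈ R → t = 1 ∨ t = -1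
  irreducible : ∀ P : Set V, (∀ x ∈ R, ∀ y ∈ R, x ∈ P → ⟪x, y⟫ ≠ 0 → y ∈ P) →
      (R ∩ P).Nonempty → R ⊆ P
  simple_mem : ∀ i ∈ Finset.Icc 1 n, a i ∈ R
  indep : LinearIndependent ℝ (fun i : (Set.Icc 1 n : Set ℕ) => a i)
  span_top : Submodule.span ℝ (a '' Set.Icc 1 n) = ⊤
  root_combo : ∀ β ∈ R, ∃ c : ℕ → ℤ, ((∀ i, 0 ≤ c i) ∨ (∀ i, c i ≤ 0)) ∧
      β = ∑ i ∈ Finset.Icc 1 n, (c i : ℝ) • a i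

namespace RootSystemWithBase

variable {V} {n : ℕ} (S : RootSystemWithBase V n)

/-- The simple reflection `s i` associated to the simple root `a i`. -/
def s (i : ℕ) : V ≃ₗᵢ[ℝ] V := sref V (S.a i)

/-- The product of the simple reflections along a list of indices
(leftmost factor acting last). -/
def prodW (l : List ℕ) : V ≃ₗᵢ[ℝ] V := (l.map S.s).prod

/-- The parabolic subgroup `W_J` of the Weyl group generated by the simple reflections
`s i` for `i ∈ J`. -/
def WJ (J : Set ℕ) : Subgroup (V ≃ₗᵢ[ℝ] V) :=
  Subgroup.closure (S.s '' (J ∩ Set.Icc 1 n))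

/-- The Weyl group `W`, generated by all simple reflections. -/
def W : Subgroup (V ≃ₗᵢ[ℝ] V) := S.WJ Set.univ

/-- The length of `w` with respect to the simple reflections indexed by `J`:
the least length of a word in these reflections expressing `w`. -/
def lenJ (J : Set ℕ) (w : V ≃ₗᵢ[ℝ] V) : ℕ :=
  sInf {k | ∃ l : List ℕ, (∀ i ∈ l, i ∈ J ∩ Set.Icc 1 n) ∧ l.length = k ∧ w = S.prodW l}

/-- The length function `ℓ` of the Weyl group. -/
def len (w : V ≃ₗᵢ[ℝ] V) : ℕ := S.lenJ Set.univ w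

/-- `w` is the longest element `w_{0,J}` of the parabolic subgroup `W_J`. -/
def IsLongest (J : Set ℕ) (w : V ≃ₗᵢ[ℝ] V) : Prop :=
  w ∈ S.WJ J ∧ ∀ x ∈ S.WJ J, S.lenJ J x ≤ S.lenJ J w

/-- `β` is a positive root (with respect to the base `a`). -/
def IsPos (β : V) : Prop :=
  β ∈ S.R ∧ ∃ c : ℕ → ℝ, (∀ i, 0 ≤ c i) ∧ β = ∑ i ∈ Finset.Icc 1 n, c i • S.a i

/-- `β` is a negative root. -/
def IsNeg (β : V) : Prop := S.IsPos (-β)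

/-- `h` is the highest root `α_0`: a root such that `h - β` is a nonnegative combination of
the simple roots for every root `β`. -/
def IsHighest (h : V) : Prop :=
  h ∈ S.R ∧ ∀ β ∈ S.R, ∃ c : ℕ → ℝ, (∀ i, 0 ≤ c i) ∧
    h - β = ∑ i ∈ Finset.Icc 1 n, c i • S.a i

/-- The root system is simply laced: all roots have the same length. -/
def SimplyLaced : Prop := ∀ α ∈ S.R, ∀ β ∈ S.R, ⟪α, α⟫ = ⟪β, β⟫

/-- `ω` is the fundamental weight `ω_r` dual to the simple root `a r`:
`⟨ω, a j⟩ = δ_{rj}` for `1 ≤ j ≤ n`. -/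
def IsFundamental (r : ℕ) (ω : V) : Prop :=
  ∀ j ∈ Finset.Icc 1 n, 2 * ⟪ω, S.a j⟫ / ⟪S.a j, S.a j⟫ = if j = r then 1 else 0

/-- A weight `ω` is minuscule: `⟨ω, β⟩ ≤ 1` for every positive root `β`. -/
def Minuscule (ω : V) : Prop := ∀ β, S.IsPos β → 2 * ⟪ω, β⟫ / ⟪β, β⟫ ≤ 1

end RootSystemWithBase

variable {V}

/-- Adjacency in the Dynkin diagram of type `E_n` (`n = 6, 7, 8`, Bourbaki labeling):
`α_2` is the branch node attached to `α_4`; `α_1, α_3, α_4, …, α_n` form a chain. -/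
def adjE (i j : ℕ) : Prop :=
  (i, j) ∈ ([(1,3),(3,4),(2,4),(4,5),(5,6),(6,7),(7,8)] : List (ℕ × ℕ)) ∨
  (j, i) ∈ ([(1,3),(3,4),(2,4),(4,5),(5,6),(6,7),(7,8)] : List (ℕ × ℕ))

/-- The element `v_2 = s_2 s_4 s_5 s_3 s_6 s_4 s_1 s_3 s_5 s_4 s_2` of the Weyl group of `E_6`. -/
def v2E6 (S : RootSystemWithBase V 6) : V ≃ₗᵢ[ℝ] V :=
  S.prodW [2, 4, 5, 3, 6, 4, 1, 3, 5, 4, 2]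
section Reflection

variable {E : Type*} [NormedAddCommGroup E] [InnerProductSpace ℝ E]

theorem sref_apply (v x : E) : sref E v x = x - (2 * ⟪x, v⟫ / ⟪v, v⟫) • v := by
  rw [sref, Submodule.reflection_orthogonal_apply, Submodule.reflection_singleton_apply,
    real_inner_self_eq_norm_sq, real_inner_comm]
  module

theorem sref_inv (v : E) : (sref E v)⁻¹ = sref E v := Submodule.reflection_inv

theorem sref_mul_self (v : E) : sref E v * sref E v = 1 := Submodule.reflection_mul_reflection _

theorem sref_self (v : E) : sref E v v = -v :=
  Submodule.reflection_orthogonalComplement_singleton_eq_neg v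

theorem sref_map (u : E ≃ₗᵢ[ℝ] E) (v : E) : sref E (u v) = u * sref E v * u⁻¹ := by
  ext x
  change _ = u (sref E v (u.symm x))
  rw [sref_apply, sref_apply, map_sub, map_smul, LinearIsometryEquiv.apply_symm_apply,
    ← u.inner_map_map (u.symm x), LinearIsometryEquiv.apply_symm_apply, u.inner_map_map]

end Reflection

def cartanPairing {n : ℕ} (g : ℕ → ℕ → ℤ) (c : Fin n → ℤ) (j : ℕ) : ℤ :=
  ∑ k, c k * g (k + 1) j

def reflectCoeffs {n : ℕ} (g : ℕ → ℕ → ℤ) (j : ℕ) (c : Fin n → ℤ) : Fin n → ℤ :=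
  fun i => if (i : ℕ) + 1 = j then c i - cartanPairing g c j else c i

namespace RootSystemWithBase

variable {E : Type*} [NormedAddCommGroup E] [InnerProductSpace ℝ E] {n : ℕ}
  (S : RootSystemWithBase E n)

def basis : Module.Basis (Set.Icc 1 n) ℝ E :=
  Module.Basis.mk S.indep (by rw [← Set.image_eq_range, S.span_top])

theorem basis_apply (i : Set.Icc 1 n) : S.basis i = S.a i := Module.Basis.mk_apply _ _ _

def coeff (i : ℕ) : E →ₗ[ℝ] ℝ :=
  if h : i ∈ Set.Icc 1 n then S.basis.coord ⟨i, h⟩ else 0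

theorem coeff_of_notMem {i : ℕ} (hi : i ∉ Set.Icc 1 n) (x : E) : S.coeff i x = 0 := by
  simp [coeff, hi]

theorem coeff_a {j : ℕ} (hj : j ∈ Set.Icc 1 n) (i : ℕ) :
    S.coeff i (S.a j) = if i = j then 1 else 0 := by
  by_cases hi : i ∈ Set.Icc 1 n
  · rw [coeff, dif_pos hi, ← S.basis_apply ⟨j, hj⟩, Module.Basis.coord_apply,
      Module.Basis.repr_self, Finsupp.single_apply]
    simp [Subtype.ext_iff, eq_comm]
  · rw [S.coeff_of_notMem hi, if_neg (by rintro rfl; exact hi hj)]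

theorem sum_coeff_smul (x : E) : ∑ i ∈ Finset.Icc 1 n, S.coeff i x • S.a i = x := by
  conv_rhs => rw [← S.basis.sum_repr x]
  rw [Finset.sum_subtype (Finset.Icc 1 n) (p := (· ∈ Set.Icc 1 n)) (by simp)]
  refine Finset.sum_congr rfl fun i _ => ?_
  rw [coeff, dif_pos i.2, S.basis_apply]
  rfl

theorem coeff_sum_smul (c : ℕ → ℝ) {i : ℕ} (hi : i ∈ Set.Icc 1 n) :
    S.coeff i (∑ j ∈ Finset.Icc 1 n, c j • S.a j) = c i := by
  simp_rw [map_sum, map_smul, smul_eq_mul]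
  rw [Finset.sum_congr rfl fun j hj => by rw [S.coeff_a (by simpa using hj)]]
  simp only [mul_ite, mul_one, mul_zero, Finset.sum_ite_eq, Finset.mem_Icc]
  exact if_pos hi

theorem coeff_sum_a {k : ℕ} (hk : k ∈ Set.Icc 1 n) :
    S.coeff k (∑ j ∈ Finset.Icc 1 n, S.a j) = 1 := by
  simpa using S.coeff_sum_smul (fun _ => 1) hk

theorem ext_coeff {x y : E} (h : ∀ i, S.coeff i x = S.coeff i y) : x = y := by
  rw [← S.sum_coeff_smul x, ← S.sum_coeff_smul y]
  simp_rw [h]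

theorem ext_inner_a {x y : E} (h : ∀ j ∈ Set.Icc 1 n, ⟪x, S.a j⟫ = ⟪y, S.a j⟫) : x = y := by
  have hker : Submodule.span ℝ (S.a '' Set.Icc 1 n) ≤ LinearMap.ker (innerₛₗ ℝ (x - y)) :=
    Submodule.span_le.2 fun _ ⟨j, hj, hv⟩ => by
      simp [← hv, h j hj]
  rw [S.span_top] at hker
  have : ⟪x - y, x - y⟫ = 0 := hker Submodule.mem_top
  rwa [inner_self_eq_zero, sub_eq_zero] at this

theorem eq_coeff_smul_a {x : E} {j : ℕ} (h : ∀ i ≠ j, S.coeff i x = 0) :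
    x = S.coeff j x • S.a j := by
  conv_lhs => rw [← S.sum_coeff_smul x]
  refine Finset.sum_eq_single j (fun i _ hij => by rw [h i hij, zero_smul]) fun hj => ?_
  rw [S.coeff_of_notMem (by simpa using hj), zero_smul]

theorem neg_mem_R {β : E} (hβ : β ∈ S.R) : -β ∈ S.R := by
  simpa [sref_self] using S.refl_mem β hβ β hβ

theorem exists_int_coeff {β : E} (hβ : β ∈ S.R) (i : ℕ) : ∃ k : ℤ, S.coeff i β = k := by
  obtain ⟨c, -, rfl⟩ := S.root_combo β hβ
  by_cases hi : i ∈ Set.Icc 1 n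
  · exact ⟨c i, S.coeff_sum_smul _ hi⟩
  · exact ⟨0, by rw [S.coeff_of_notMem hi, Int.cast_zero]⟩

theorem coeff_nonneg_or_nonpos {β : E} (hβ : β ∈ S.R) :
    (∀ i, 0 ≤ S.coeff i β) ∨ ∀ i, S.coeff i β ≤ 0 := by
  obtain ⟨c, hc, rfl⟩ := S.root_combo β hβ
  have key : ∀ i, S.coeff i (∑ j ∈ Finset.Icc 1 n, (c j : ℝ) • S.a j) = 0 ∨
      S.coeff i (∑ j ∈ Finset.Icc 1 n, (c j : ℝ) • S.a j) = c i := by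
    intro i
    by_cases hi : i ∈ Set.Icc 1 n
    · exact .inr (S.coeff_sum_smul _ hi)
    · exact .inl (S.coeff_of_notMem hi _)
  refine hc.imp (fun h i => ?_) (fun h i => ?_) <;>
    rcases key i with h' | h' <;> rw [h'] <;> simp [h i]

theorem exists_one_le_coeff {β : E} (hβ : β ∈ S.R) (hpos : ∀ i, 0 ≤ S.coeff i β) :
    ∃ k, 1 ≤ S.coeff k β := by
  by_contra! h
  refine S.ne_zero β hβ (S.ext_coeff fun i => ?_)
  obtain ⟨k, hk⟩ := S.exists_int_coeff hβ i
  have h0 : 0 ≤ k := by exact_mod_cast hk ▸ hpos i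
  have h1 : k < 1 := by exact_mod_cast hk ▸ h i
  rw [hk, map_zero, show k = 0 by omega, Int.cast_zero]

theorem s_inv (j : ℕ) : (S.s j)⁻¹ = S.s j := sref_inv _

theorem coeff_s_of_ne {i j : ℕ} (hj : j ∈ Set.Icc 1 n) (hij : i ≠ j) (x : E) :
    S.coeff i (S.s j x) = S.coeff i x := by
  rw [s, sref_apply, map_sub, map_smul, S.coeff_a hj, if_neg hij, smul_zero, sub_zero]

def IsPosIn (J : Set ℕ) (β : E) : Prop :=
  β ∈ S.R ∧ (∀ i, 0 ≤ S.coeff i β) ∧ ∀ i ∉ J, S.coeff i β = 0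

theorem isPosIn_a {J : Set ℕ} {j : ℕ} (hj : j ∈ J ∩ Set.Icc 1 n) : S.IsPosIn J (S.a j) := by
  refine ⟨S.simple_mem j (by simpa using hj.2), fun i => ?_, fun i hi => ?_⟩
  · rw [S.coeff_a hj.2]; split_ifs <;> norm_num
  · rw [S.coeff_a hj.2, if_neg (by rintro rfl; exact hi hj.1)]

theorem not_isPosIn_neg {J : Set ℕ} {β : E} (hβ : S.IsPosIn J β) : ¬ S.IsPosIn J (-β) := by
  rintro ⟨-, hneg, -⟩
  obtain ⟨k, hk⟩ := S.exists_one_le_coeff hβ.1 hβ.2.1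
  have := hneg k
  rw [map_neg] at this
  linarith

theorem isPosIn_or_isPosIn_neg {J : Set ℕ} {β : E} (hβ : β ∈ S.R)
    (hJ : ∀ i ∉ J, S.coeff i β = 0) : S.IsPosIn J β ∨ S.IsPosIn J (-β) := by
  refine (S.coeff_nonneg_or_nonpos hβ).imp (fun h => ⟨hβ, h, hJ⟩) fun h => ?_
  refine ⟨S.neg_mem_R hβ, fun i => ?_, fun i hi => ?_⟩ <;> rw [map_neg]
  · exact neg_nonneg.2 (h i)
  · rw [hJ i hi, neg_zero]

theorem isPosIn_s {J : Set ℕ} {j : ℕ} (hj : j ∈ J ∩ Set.Icc 1 n) {β : E}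
    (hβ : S.IsPosIn J β) (hne : β ≠ S.a j) : S.IsPosIn J (S.s j β) := by
  obtain ⟨hβR, hpos, hJ⟩ := hβ
  obtain ⟨k, hkj, hk⟩ : ∃ k ≠ j, 0 < S.coeff k β := by
    by_contra! h
    have hβj := S.eq_coeff_smul_a fun i hi => le_antisymm (h i hi) (hpos i)
    rcases S.reduced _ (S.simple_mem j (by simpa using hj.2)) _ (hβj ▸ hβR) with h1 | h1
    · exact hne (by rw [hβj, h1, one_smul])
    · linarith [hpos j]
  have hsR : S.s j β ∈ S.R := S.refl_mem _ (S.simple_mem j (by simpa using hj.2)) _ hβR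
  refine ⟨hsR, ?_, fun i hi => ?_⟩
  · refine (S.coeff_nonneg_or_nonpos hsR).resolve_right fun h => ?_
    have := h k
    rw [S.coeff_s_of_ne hj.2 hkj] at this
    linarith
  · rw [S.coeff_s_of_ne hj.2 (by rintro rfl; exact hi hj.1), hJ i hi]

theorem s_mem_WJ {J : Set ℕ} {j : ℕ} (hj : j ∈ J ∩ Set.Icc 1 n) : S.s j ∈ S.WJ J :=
  Subgroup.subset_closure ⟨j, hj, rfl⟩

theorem WJ_induction {J : Set ℕ} {p : (E ≃ₗᵢ[ℝ] E) → Prop}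
    (s_mem : ∀ j ∈ J ∩ Set.Icc 1 n, p (S.s j)) (one : p 1)
    (mul : ∀ u w, p u → p w → p (u * w)) {w : E ≃ₗᵢ[ℝ] E} (hw : w ∈ S.WJ J) : p w := by
  induction hw using Subgroup.closure_induction'' with
  | mem _ hx => obtain ⟨j, hj, rfl⟩ := hx; exact s_mem j hj
  | inv_mem _ hx => obtain ⟨j, hj, rfl⟩ := hx; rw [S.s_inv]; exact s_mem j hj
  | one => exact one
  | mul u w _ _ hu hw => exact mul u w hu hw

theorem coeff_apply_of_mem_WJ {J : Set ℕ} {w : E ≃ₗᵢ[ℝ] E} (hw : w ∈ S.WJ J) {i : ℕ}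
    (hi : i ∉ J) (x : E) : S.coeff i (w x) = S.coeff i x := by
  refine S.WJ_induction (p := fun w => ∀ x, S.coeff i (w x) = S.coeff i x)
    (fun j hj => S.coeff_s_of_ne hj.2 (by rintro rfl; exact hi hj.1)) (fun _ => rfl)
    (fun u w hu hw x => (hu (w x)).trans (hw x)) hw x

theorem apply_mem_R_of_mem_WJ {J : Set ℕ} {w : E ≃ₗᵢ[ℝ] E} (hw : w ∈ S.WJ J) {β : E}
    (hβ : β ∈ S.R) : w β ∈ S.R := by
  refine S.WJ_induction (p := fun w => ∀ β ∈ S.R, w β ∈ S.R)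
    (fun j hj => S.refl_mem _ (S.simple_mem j (by simpa using hj.2))) (fun _ h => h)
    (fun u w hu hw β hβ => hu _ (hw β hβ)) hw β hβ

theorem apply_eq_self_of_mem_WJ {J : Set ℕ} {w : E ≃ₗᵢ[ℝ] E} (hw : w ∈ S.WJ J) {x : E}
    (hx : ∀ j ∈ J ∩ Set.Icc 1 n, ⟪x, S.a j⟫ = 0) : w x = x := by
  refine S.WJ_induction (p := fun w => w x = x) (fun j hj => ?_) rfl
    (fun u w hu hw => (congrArg u hw).trans hu) hw
  rw [s, sref_apply, hx j hj, mul_zero, zero_div, zero_smul, sub_zero]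

theorem isPosIn_or_isPosIn_neg_apply_a {J : Set ℕ} {w : E ≃ₗᵢ[ℝ] E} (hw : w ∈ S.WJ J) {t : ℕ}
    (ht : t ∈ J ∩ Set.Icc 1 n) : S.IsPosIn J (w (S.a t)) ∨ S.IsPosIn J (-(w (S.a t))) := by
  refine S.isPosIn_or_isPosIn_neg
    (S.apply_mem_R_of_mem_WJ hw (S.simple_mem t (by simpa using ht.2))) fun k hk => ?_
  rw [S.coeff_apply_of_mem_WJ hw hk, S.coeff_a ht.2, if_neg (by rintro rfl; exact hk ht.1)]

theorem prodW_cons (i : ℕ) (l : List ℕ) : S.prodW (i :: l) = S.s i * S.prodW l := by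
  simp [prodW]

theorem prodW_append (l m : List ℕ) : S.prodW (l ++ m) = S.prodW l * S.prodW m := by
  simp [prodW]

theorem prodW_inv (l : List ℕ) : (S.prodW l)⁻¹ = S.prodW l.reverse := by
  induction l with
  | nil => simp [prodW]
  | cons i l ih =>
    rw [prodW_cons, mul_inv_rev, ih, S.s_inv, List.reverse_cons, prodW_append]
    simp [prodW]

theorem prodW_mem_WJ {J : Set ℕ} {l : List ℕ} (hl : ∀ i ∈ l, i ∈ J ∩ Set.Icc 1 n) :
    S.prodW l ∈ S.WJ J := by
  induction l with
  | nil => exact one_mem _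
  | cons i l ih =>
    rw [prodW_cons]
    exact mul_mem (S.s_mem_WJ (hl i List.mem_cons_self))
      (ih fun j hj => hl j (List.mem_cons_of_mem i hj))

theorem exists_word_of_mem_WJ {J : Set ℕ} {w : E ≃ₗᵢ[ℝ] E} (hw : w ∈ S.WJ J) :
    ∃ l : List ℕ, (∀ i ∈ l, i ∈ J ∩ Set.Icc 1 n) ∧ w = S.prodW l := by
  refine S.WJ_induction
    (p := fun w => ∃ l : List ℕ, (∀ i ∈ l, i ∈ J ∩ Set.Icc 1 n) ∧ w = S.prodW l)
    (fun j hj => ⟨[j], by simpa using hj, by simp [prodW]⟩)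
    ⟨[], by simp, rfl⟩ (fun u w hu hw => ?_) hw
  obtain ⟨l, hl, rfl⟩ := hu
  obtain ⟨m, hm, rfl⟩ := hw
  exact ⟨l ++ m, List.forall_mem_append.2 ⟨hl, hm⟩, (S.prodW_append l m).symm⟩

theorem lenJ_prodW_le {J : Set ℕ} {l : List ℕ} (hl : ∀ i ∈ l, i ∈ J ∩ Set.Icc 1 n) :
    S.lenJ J (S.prodW l) ≤ l.length :=
  Nat.sInf_le ⟨l, hl, rfl, rfl⟩

theorem exists_reduced_word {J : Set ℕ} {w : E ≃ₗᵢ[ℝ] E} (hw : w ∈ S.WJ J) :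
    ∃ l : List ℕ, (∀ i ∈ l, i ∈ J ∩ Set.Icc 1 n) ∧ l.length = S.lenJ J w ∧ w = S.prodW l := by
  obtain ⟨l, hl, rfl⟩ := S.exists_word_of_mem_WJ hw
  exact Nat.sInf_mem (s := {k | ∃ m : List ℕ, (∀ i ∈ m, i ∈ J ∩ Set.Icc 1 n) ∧
    m.length = k ∧ S.prodW l = S.prodW m}) ⟨l.length, l, hl, rfl, rfl⟩

theorem exists_shorter_word {J : Set ℕ} {t : ℕ} (ht : t ∈ J ∩ Set.Icc 1 n) :
    ∀ l : List ℕ, (∀ i ∈ l, i ∈ J ∩ Set.Icc 1 n) → S.IsPosIn J (-(S.prodW l (S.a t))) →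
      ∃ m : List ℕ, (∀ i ∈ m, i ∈ J ∩ Set.Icc 1 n) ∧ m.length + 1 = l.length ∧
        S.prodW l * S.s t = S.prodW m
  | [], _, hneg => (S.not_isPosIn_neg (S.isPosIn_a ht) hneg).elim
  | i :: l, hl, hneg => by
    have hi := hl i List.mem_cons_self
    have hl' : ∀ j ∈ l, j ∈ J ∩ Set.Icc 1 n := fun j hj => hl j (List.mem_cons_of_mem i hj)
    rcases S.isPosIn_or_isPosIn_neg_apply_a (S.prodW_mem_WJ hl') ht with hpos | hneg'
    · -- `s i` turns the positive root `γ = prodW l (a t)` negative, so `γ = a i`.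
      have hγ : S.prodW l (S.a t) = S.a i := by
        by_contra hne
        exact S.not_isPosIn_neg (S.isPosIn_s hi hpos hne) hneg
      have hsi : S.s i = S.prodW l * S.s t * (S.prodW l)⁻¹ := by
        rw [s, ← hγ, sref_map]; rfl
      refine ⟨l, hl', rfl, ?_⟩
      rw [prodW_cons, hsi, inv_mul_cancel_right, mul_assoc, s, sref_mul_self, mul_one]
    · obtain ⟨m, hm, hlen, heq⟩ := exists_shorter_word ht l hl' hneg'
      exact ⟨i :: m, List.forall_mem_cons.2 ⟨hi, hm⟩, by simp [hlen],
        by rw [prodW_cons, prodW_cons, mul_assoc, heq]⟩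

def height : E →ₗ[ℝ] ℝ := ∑ i ∈ Finset.Icc 1 n, S.coeff i

theorem height_apply (x : E) : S.height x = ∑ i ∈ Finset.Icc 1 n, S.coeff i x :=
  LinearMap.sum_apply _ _ _

theorem height_a {j : ℕ} (hj : j ∈ Set.Icc 1 n) : S.height (S.a j) = 1 := by
  simp_rw [height_apply, S.coeff_a hj]
  rw [Finset.sum_ite_eq' (Finset.Icc 1 n) j, if_pos (by simpa using hj)]

theorem one_le_height {β : E} (hβ : β ∈ S.R) (hpos : ∀ i, 0 ≤ S.coeff i β) :
    1 ≤ S.height β := by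
  obtain ⟨k, hk⟩ := S.exists_one_le_coeff hβ hpos
  have hkI : k ∈ Finset.Icc 1 n := by
    by_contra h
    rw [S.coeff_of_notMem (by simpa using h)] at hk
    norm_num at hk
  rw [height_apply]
  exact hk.trans (Finset.single_le_sum (fun i _ => hpos i) hkI)

theorem exists_eq_a_of_height_eq_one {J : Set ℕ} {β : E} (hβ : S.IsPosIn J β)
    (h : S.height β = 1) : ∃ k ∈ J ∩ Set.Icc 1 n, β = S.a k := by
  obtain ⟨hβR, hpos, hJ⟩ := hβ
  obtain ⟨k, hk⟩ := S.exists_one_le_coeff hβR hpos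
  have hkJ : k ∈ J := by_contra fun h => by rw [hJ k h] at hk; norm_num at hk
  have hkI : k ∈ Set.Icc 1 n := by_contra fun h => by
    rw [S.coeff_of_notMem h] at hk; norm_num at hk
  rw [height_apply, ← Finset.add_sum_erase _ _ (by simpa using hkI)] at h
  have hrest_nonneg : 0 ≤ ∑ i ∈ (Finset.Icc 1 n).erase k, S.coeff i β :=
    Finset.sum_nonneg fun i _ => hpos i
  have hrest := (Finset.sum_eq_zero_iff_of_nonneg fun i _ => hpos i).1 (by linarith)
  have hβk := S.eq_coeff_smul_a (j := k) fun i hik => by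
    by_cases hi : i ∈ Set.Icc 1 n
    · exact hrest i (Finset.mem_erase.2 ⟨hik, by simpa using hi⟩)
    · exact S.coeff_of_notMem hi β
  refine ⟨k, ⟨hkJ, hkI⟩, ?_⟩
  rw [hβk, show S.coeff k β = 1 by linarith, one_smul]

section Longest

variable {S} {J : Set ℕ} {w₀ : E ≃ₗᵢ[ℝ] E}

theorem IsLongest.isPosIn_neg_apply_a (hw₀ : S.IsLongest J w₀) {t : ℕ}
    (ht : t ∈ J ∩ Set.Icc 1 n) : S.IsPosIn J (-(w₀ (S.a t))) := by
  refine (S.isPosIn_or_isPosIn_neg_apply_a hw₀.1 ht).resolve_left fun hpos => ?_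
  have hmem : w₀ * S.s t ∈ S.WJ J := mul_mem hw₀.1 (S.s_mem_WJ ht)
  obtain ⟨m, hm, hlen, hw⟩ := S.exists_reduced_word hmem
  have hneg : S.IsPosIn J (-(S.prodW m (S.a t))) := by
    rwa [← hw, show (w₀ * S.s t) (S.a t) = w₀ (S.s t (S.a t)) from rfl, s, sref_self,
      map_neg, neg_neg]
  obtain ⟨m', hm', hlen', hw'⟩ := S.exists_shorter_word ht m hm hneg
  rw [← hw, mul_assoc, s, sref_mul_self, mul_one] at hw'
  have := S.lenJ_prodW_le hm'
  have := hw₀.2 _ hmem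
  rw [← hw'] at *
  omega

theorem IsLongest.inv (hw₀ : S.IsLongest J w₀) : S.IsLongest J w₀⁻¹ := by
  have hle : ∀ w ∈ S.WJ J, S.lenJ J w⁻¹ ≤ S.lenJ J w := fun w hw => by
    obtain ⟨l, hl, hlen, rfl⟩ := S.exists_reduced_word hw
    rw [S.prodW_inv, ← hlen, ← List.length_reverse]
    exact S.lenJ_prodW_le fun i hi => hl i (List.mem_reverse.1 hi)
  refine ⟨inv_mem hw₀.1, fun x hx => (hw₀.2 x hx).trans ?_⟩
  simpa using hle _ (inv_mem hw₀.1)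

theorem IsLongest.exists_apply_a_eq_neg (hw₀ : S.IsLongest J w₀) {t : ℕ}
    (ht : t ∈ J ∩ Set.Icc 1 n) : ∃ k ∈ J ∩ Set.Icc 1 n, w₀ (S.a t) = -S.a k := by
  set β := -(w₀ (S.a t))
  have hβ : S.IsPosIn J β := hw₀.isPosIn_neg_apply_a ht
  have hterm : ∀ k ∈ Finset.Icc 1 n,
      S.coeff k β ≤ S.coeff k β * S.height (-(w₀⁻¹ (S.a k))) := fun k hk => by
    by_cases hkJ : k ∈ J
    · obtain ⟨hR, hpos, -⟩ := hw₀.inv.isPosIn_neg_apply_a ⟨hkJ, by simpa using hk⟩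
      exact le_mul_of_one_le_right (hβ.2.1 k) (S.one_le_height hR hpos)
    · rw [hβ.2.2 k hkJ, zero_mul]
  have hexpand : S.a t = ∑ k ∈ Finset.Icc 1 n, S.coeff k β • -(w₀⁻¹ (S.a k)) := by
    have hinv : S.a t = -(w₀⁻¹ β) := by
      rw [map_neg, neg_neg]; exact (w₀.symm_apply_apply _).symm
    conv_lhs => rw [hinv, ← S.sum_coeff_smul β]
    simp only [map_sum, map_smul, smul_neg, Finset.sum_neg_distrib]
  have hheight : S.height β = 1 := by
    refine le_antisymm ?_ (S.one_le_height hβ.1 hβ.2.1)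
    calc S.height β = ∑ k ∈ Finset.Icc 1 n, S.coeff k β := S.height_apply β
      _ ≤ ∑ k ∈ Finset.Icc 1 n, S.coeff k β * S.height (-(w₀⁻¹ (S.a k))) :=
        Finset.sum_le_sum hterm
      _ = S.height (S.a t) := by simp_rw [hexpand, map_sum, map_smul, smul_eq_mul]
      _ = 1 := S.height_a ht.2
  obtain ⟨k, hk, hβk⟩ := S.exists_eq_a_of_height_eq_one hβ hheight
  exact ⟨k, hk, by rw [← hβk, neg_neg]⟩

end Longest

theorem isPos_of_coeff_pos {β : E} (hβ : β ∈ S.R) {k : ℕ} (hk : 0 < S.coeff k β) :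
    S.IsPos β :=
  ⟨hβ, fun i => S.coeff i β,
    (S.coeff_nonneg_or_nonpos hβ).resolve_right fun h => (h k).not_gt hk,
    (S.sum_coeff_smul β).symm⟩

theorem ne_a_of_coeff_ne_zero {x : E} {k k' : ℕ} (hkk' : k ≠ k') (hk : S.coeff k x ≠ 0)
    (hk' : S.coeff k' x ≠ 0) {j : ℕ} (hj : j ∈ Set.Icc 1 n) : x ≠ S.a j := by
  rintro rfl
  rw [S.coeff_a hj] at hk hk'
  split_ifs at hk hk' with h h' <;> simp_all

theorem isPos_apply_of_mem_WJ {J : Set ℕ} {w : E ≃ₗᵢ[ℝ] E} (hw : w ∈ S.WJ J) {β : E}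
    (hβ : β ∈ S.R) {k k' : ℕ} (hkk' : k ≠ k') (hk : k ∉ J) (hk' : k' ∉ J)
    (hβk : 0 < S.coeff k β) (hβk' : 0 < S.coeff k' β) :
    S.IsPos (w β) ∧ ¬ ∃ j ∈ Finset.Icc 1 n, w β = S.a j := by
  rw [← S.coeff_apply_of_mem_WJ hw hk] at hβk
  rw [← S.coeff_apply_of_mem_WJ hw hk'] at hβk'
  refine ⟨S.isPos_of_coeff_pos (S.apply_mem_R_of_mem_WJ hw hβ) hβk, fun ⟨j, hj, h⟩ => ?_⟩
  exact S.ne_a_of_coeff_ne_zero hkk' hβk.ne' hβk'.ne' (by simpa using hj) h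

def HasGram (g : ℕ → ℕ → ℤ) : Prop :=
  ∀ i ∈ Set.Icc 1 n, ∀ j ∈ Set.Icc 1 n, ⟪S.a i, S.a j⟫ = g i j

/-- `c i` is the coefficient of `a (i + 1)`; coefficient vectors are `Fin n`-indexed so that
`decide` can evaluate the action of a word on them (see `prodW_comb`). -/
def comb (c : Fin n → ℤ) : E := ∑ i : Fin n, (c i : ℝ) • S.a (i + 1)

theorem inner_comb_a {g : ℕ → ℕ → ℤ} (hg : S.HasGram g)
    (c : Fin n → ℤ) {j : ℕ} (hj : j ∈ Set.Icc 1 n) :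
    ⟪S.comb c, S.a j⟫ = cartanPairing g c j := by
  simp only [comb, cartanPairing, sum_inner, real_inner_smul_left, Int.cast_sum, Int.cast_mul]
  exact Finset.sum_congr rfl fun k _ => by
    rw [hg _ ⟨Nat.le_add_left 1 k, k.isLt⟩ j hj]

theorem s_comb {g : ℕ → ℕ → ℤ} (hg : S.HasGram g)
    (hg₂ : ∀ j, g j j = 2) (c : Fin n → ℤ) {j : ℕ} (hj : j ∈ Set.Icc 1 n) :
    S.s j (S.comb c) = S.comb (reflectCoeffs g j c) := by
  have hterm : ∀ i : Fin n, ((reflectCoeffs g j c i : ℤ) : ℝ) • S.a (i + 1) =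
      (c i : ℝ) • S.a (i + 1) -
        if (i : ℕ) + 1 = j then (cartanPairing g c j : ℝ) • S.a j else 0 := fun i => by
    unfold reflectCoeffs
    split_ifs with h
    · rw [h, Int.cast_sub, sub_smul]
    · rw [sub_zero]
  have hsingle : (∑ i : Fin n, if (i : ℕ) + 1 = j then (cartanPairing g c j : ℝ) • S.a j else 0)
      = (cartanPairing g c j : ℝ) • S.a j := by
    rw [Fintype.sum_eq_single ⟨j - 1, by grind⟩ fun i hi => if_neg (by grind), if_pos (by grind)]
  rw [s, sref_apply, hg j hj j hj, hg₂, S.inner_comb_a hg c hj, comb, comb,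
    Finset.sum_congr rfl fun i _ => hterm i, Finset.sum_sub_distrib, hsingle]
  norm_num

theorem prodW_comb {g : ℕ → ℕ → ℤ} (hg : S.HasGram g)
    (hg₂ : ∀ j, g j j = 2) (c : Fin n → ℤ) {l : List ℕ} (hl : ∀ j ∈ l, j ∈ Set.Icc 1 n) :
    S.prodW l (S.comb c) = S.comb (l.foldr (reflectCoeffs g) c) := by
  induction l with
  | nil => rfl
  | cons j l ih =>
    rw [prodW_cons, LinearIsometryEquiv.coe_mul, Function.comp_apply,
      ih fun i hi => hl i (List.mem_cons_of_mem j hi), S.s_comb hg hg₂ _ (hl j List.mem_cons_self),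
      List.foldr_cons]

end RootSystemWithBase

/-- Only a local instance: globally it would change the elaboration of `if adjE i j` in the
hypotheses on the Gram matrix, which use the classical instance. -/
@[reducible] def decidableAdjE : DecidableRel adjE := fun i j => by unfold adjE; infer_instance

section GramE6

attribute [local instance] decidableAdjE

def gramE6 (i j : ℕ) : ℤ := if i = j then 2 else if adjE i j then -1 else 0

theorem gramE6_self (j : ℕ) : gramE6 j j = 2 := if_pos rfl

theorem foldr_reflectCoeffs_gramE6_v2E6 :
    [2, 4, 5, 3, 6, 4, 1, 3, 5, 4, 2].foldr (reflectCoeffs gramE6) ![0, 0, 0, 1, 0, 0] =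
      ![0, 1, 1, 2, 1, 0] := by
  decide

theorem cartanPairing_gramE6_omega2 : ∀ j ∈ Finset.Icc 1 6,
    cartanPairing gramE6 ![1, 2, 2, 3, 2, 1] j = if j = 2 then 1 else 0 := by
  decide

/-- A non-backtracking path `p₁ - p₃ - p₄ - p₅ - p₆` of length four in the chain
`1 - 3 - 4 - 5 - 6` is the chain itself, possibly reversed. -/
theorem gramE6_path_rigid : ∀ p₁ ∈ [1, 3, 4, 5, 6], ∀ p₃ ∈ [1, 3, 4, 5, 6],
    ∀ p₄ ∈ [1, 3, 4, 5, 6], ∀ p₅ ∈ [1, 3, 4, 5, 6], ∀ p₆ ∈ [1, 3, 4, 5, 6],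
    gramE6 p₁ p₃ = -1 → gramE6 p₃ p₄ = -1 → gramE6 p₄ p₅ = -1 → gramE6 p₅ p₆ = -1 →
    gramE6 p₁ p₄ = 0 → gramE6 p₃ p₅ = 0 → gramE6 p₄ p₆ = 0 →
    p₄ = 4 ∧ (p₁ = 1 ∧ p₆ = 6 ∨ p₁ = 6 ∧ p₆ = 1) := by
  decide

end GramE6

namespace RootSystemWithBase

variable {E : Type*} [NormedAddCommGroup E] [InnerProductSpace ℝ E] (S : RootSystemWithBase E 6)

theorem hasGram_gramE6 (hE : ∀ i ∈ Finset.Icc 1 6, ∀ j ∈ Finset.Icc 1 6,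
      ⟪S.a i, S.a j⟫ = if i = j then 2 else if adjE i j then -1 else 0) :
    S.HasGram gramE6 := fun i hi j hj => by
  rw [hE i (by simpa using hi) j (by simpa using hj), gramE6]
  split_ifs <;> norm_num

theorem v2E6_apply_a_four (hg : S.HasGram gramE6) :
    v2E6 S (S.a 4) = S.a 2 + S.a 3 + (2 : ℝ) • S.a 4 + S.a 5 := by
  have h4 : S.a 4 = S.comb ![0, 0, 0, 1, 0, 0] := by simp [comb, Fin.sum_univ_succ]
  rw [v2E6, h4, S.prodW_comb hg gramE6_self _ (by simp), foldr_reflectCoeffs_gramE6_v2E6]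
  simp [comb, Fin.sum_univ_succ]
  module

theorem inner_a_of_isFundamental_two (hg : S.HasGram gramE6)
    {ω : E} (hω : S.IsFundamental 2 ω) {j : ℕ} (hj : j ∈ Set.Icc 1 6) :
    ⟪ω, S.a j⟫ = if j = 2 then 1 else 0 := by
  have := hω j (by simpa using hj)
  rw [hg j hj j hj, gramE6_self] at this
  split_ifs at this ⊢ <;> linarith

theorem eq_of_isFundamental_two (hg : S.HasGram gramE6)
    {ω : E} (hω : S.IsFundamental 2 ω) :
    ω = S.a 1 + (2 : ℝ) • S.a 2 + (2 : ℝ) • S.a 3 + (3 : ℝ) • S.a 4 + (2 : ℝ) • S.a 5 + S.a 6 := by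
  have : ω = S.comb ![1, 2, 2, 3, 2, 1] := S.ext_inner_a fun j hj => by
    rw [S.inner_a_of_isFundamental_two hg hω hj, S.inner_comb_a hg _ hj,
      cartanPairing_gramE6_omega2 j (by simpa using hj)]
    split_ifs <;> norm_num
  rw [this]
  simp [comb, Fin.sum_univ_succ]
  module

theorem IsLongest.apply_a_four_and_apply_a_one_add_a_six {S : RootSystemWithBase E 6}
    (hg : S.HasGram gramE6) {w₀ : E ≃ₗᵢ[ℝ] E} (hw₀ : S.IsLongest (Set.Icc 1 6 \ {2}) w₀) :
    w₀ (S.a 4) = -S.a 4 ∧ w₀ (S.a 1 + S.a 6) = -(S.a 1 + S.a 6) := by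
  have hσ : ∀ t ∈ [1, 3, 4, 5, 6], ∃ k ∈ [1, 3, 4, 5, 6], w₀ (S.a t) = -S.a k := by
    intro t ht
    obtain ⟨k, hk, h⟩ := hw₀.exists_apply_a_eq_neg (t := t) (by simp at ht ⊢; omega)
    exact ⟨k, by simp at hk ⊢; omega, h⟩
  choose! σ hσmem hσ using hσ
  have hgram : ∀ t ∈ [1, 3, 4, 5, 6], ∀ u ∈ [1, 3, 4, 5, 6],
      gramE6 (σ t) (σ u) = gramE6 t u := fun t ht u hu => by
    have := w₀.inner_map_map (S.a t) (S.a u)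
    have hmem : ∀ v ∈ [1, 3, 4, 5, 6], v ∈ Set.Icc 1 6 := by simp
    rw [hσ t ht, hσ u hu, inner_neg_neg, hg _ (hmem _ (hσmem t ht)) _ (hmem _ (hσmem u hu)),
      hg t (hmem t ht) u (hmem u hu)] at this
    exact_mod_cast this
  obtain ⟨h4, h16⟩ := gramE6_path_rigid _ (hσmem 1 (by simp)) _ (hσmem 3 (by simp))
    _ (hσmem 4 (by simp)) _ (hσmem 5 (by simp)) _ (hσmem 6 (by simp))
    ((hgram 1 (by simp) 3 (by simp)).trans (by decide))
    ((hgram 3 (by simp) 4 (by simp)).trans (by decide))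
    ((hgram 4 (by simp) 5 (by simp)).trans (by decide))
    ((hgram 5 (by simp) 6 (by simp)).trans (by decide))
    ((hgram 1 (by simp) 4 (by simp)).trans (by decide))
    ((hgram 3 (by simp) 5 (by simp)).trans (by decide))
    ((hgram 4 (by simp) 6 (by simp)).trans (by decide))
  refine ⟨by rw [hσ 4 (by simp), h4], ?_⟩
  rw [map_add, hσ 1 (by simp), hσ 6 (by simp)]
  rcases h16 with ⟨h1, h6⟩ | ⟨h1, h6⟩ <;> rw [h1, h6] <;> abel

end RootSystemWithBase

/-- In type `E_6`, with `v_2` as above: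
(i) `w_{0, S∖{α_2}} v_2(α_4) = ω_2 - (α_2 + α_3 + 2α_4 + α_5) = α_1 + α_2 + α_3 + α_4 + α_5 + α_6`;
(ii) for each `i ∈ {3, 4, 5}`, `w_{0, S∖{α_2, α_i}} w_{0, S∖{α_2}} v_2(α_4)` is a positive
root that is not simple. -/
theorem statement11 (S : RootSystemWithBase V 6)
    (hE : ∀ i ∈ Finset.Icc 1 6, ∀ j ∈ Finset.Icc 1 6,
      ⟪S.a i, S.a j⟫ = if i = j then 2 else if adjE i j then -1 else 0)
    (ω : V) (hω : S.IsFundamental 2 ω)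
    (w0a : V ≃ₗᵢ[ℝ] V) (hw0a : S.IsLongest (Set.Icc 1 6 \ {2}) w0a) :
    (w0a (v2E6 S (S.a 4)) = ω - (S.a 2 + S.a 3 + (2 : ℝ) • S.a 4 + S.a 5) ∧
     w0a (v2E6 S (S.a 4)) = S.a 1 + S.a 2 + S.a 3 + S.a 4 + S.a 5 + S.a 6) ∧
    (∀ i ∈ ({3, 4, 5} : Set ℕ), ∀ w0b : V ≃ₗᵢ[ℝ] V,
      S.IsLongest (Set.Icc 1 6 \ {2, i}) w0b →
      S.IsPos (w0b (w0a (v2E6 S (S.a 4)))) ∧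
      ¬ ∃ j ∈ Finset.Icc 1 6, w0b (w0a (v2E6 S (S.a 4))) = S.a j) := by
  have hg := S.hasGram_gramE6 hE
  have hv := S.v2E6_apply_a_four hg
  have hωeq := S.eq_of_isFundamental_two hg hω
  obtain ⟨h4, h16⟩ := hw0a.apply_a_four_and_apply_a_one_add_a_six hg
  have hfix : w0a ω = ω := S.apply_eq_self_of_mem_WJ hw0a.1 fun j hj => by
    rw [S.inner_a_of_isFundamental_two hg hω hj.2, if_neg (by rintro rfl; simp at hj)]
  have hθ : w0a (v2E6 S (S.a 4)) = ω - v2E6 S (S.a 4) := by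
    have hsplit : v2E6 S (S.a 4) = (1 / 2 : ℝ) • ω + (1 / 2 : ℝ) • (S.a 4 - (S.a 1 + S.a 6)) := by
      rw [hv, hωeq]; module
    rw [hsplit, map_add, map_smul, map_smul, map_sub, hfix, h4, h16]
    module
  have hθ' : w0a (v2E6 S (S.a 4)) = S.a 1 + S.a 2 + S.a 3 + S.a 4 + S.a 5 + S.a 6 := by
    rw [hθ, hv, hωeq]; module
  refine ⟨⟨hθ.trans (by rw [hv]), hθ'⟩, fun i hi w0b hw0b => ?_⟩
  have hθR : w0a (v2E6 S (S.a 4)) ∈ S.R := S.apply_mem_R_of_mem_WJ hw0a.1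
    (S.apply_mem_R_of_mem_WJ (J := Set.univ) (S.prodW_mem_WJ (by simp)) (S.simple_mem 4 (by simp)))
  have hcoeff : ∀ k ∈ Set.Icc 1 6, S.coeff k (w0a (v2E6 S (S.a 4))) = 1 := fun k hk => by
    rw [hθ', ← S.coeff_sum_a hk]
    simp [Finset.sum_Icc_succ_top, add_assoc]
  have hi' : i ∈ Set.Icc 1 6 ∧ i ≠ 2 := by
    simp only [Set.mem_insert_iff, Set.mem_singleton_iff] at hi; simp; omega
  exact S.isPos_apply_of_mem_WJ hw0b.1 hθR hi'.2.symm (by simp) (by simp)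
    (by rw [hcoeff 2 (by simp)]; norm_num) (by rw [hcoeff i hi'.1]; norm_num)

end PaperFormal
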